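/- arXiv:2004.12423 — 3 statements merged into one kernel-verified Lean document; each statement's English description precedes it below -/
import Mathlib

section
/- Let (X,F) be a symmetric n-ary band. For every x, y ∈ X the following conditions are equivalent: (i) B(x,y) = y and B(y,x) = x (i.e., x σ y); (ii) ℓ_x = ℓ_y; (iii) there exist t, t' ∈ X with y = ℓ_x(t) and x = ℓ_y(t'); (iv) there exist x₂,…,xₙ, y₂,…,yₙ ∈ X with y = F(x, x₂,…,xₙ) and x = F(y, y₂,…,yₙ). -/
/-!
Associativity lets `B(a, -)` act on the first argument of `F`:
`B(a, F(c₁, …, cₙ)) = F(B(a, c₁), c₂, …, cₙ)`. In particular `B(a, c₁) = c₁` forces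
`B(a, F c) = F c`, which with `B(x, x) = x` gives (iv) ⇒ (i). Symmetry moves the last argument
of `B(y, z) = F(y, …, y, z)` to the front, so the maps `ℓ_x` commute, and under (i)
`ℓ_x = ℓ_y ∘ ℓ_x = ℓ_x ∘ ℓ_y = ℓ_y`, the outer equalities again by absorption.
-/

namespace NaryBand

variable {X : Type*}

/-- Replace the window of length `n` starting at position `i` (0-based) of the
`(2*n-1)`-tuple `x` by the value of `F` on that window. -/
def contract {n : ℕ} (F : (Fin n → X) → X) (i : ℕ) (hn : 2 ≤ n) (hi : i ≤ n - 1)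
    (x : Fin (2 * n - 1) → X) : Fin n → X :=
  fun j =>
    if _h1 : (j : ℕ) < i then x ⟨(j : ℕ), by have := j.isLt; omega⟩
    else if _h2 : (j : ℕ) = i then
      F (fun k => x ⟨i + (k : ℕ), by have := k.isLt; omega⟩)
    else x ⟨(j : ℕ) + n - 1, by have := j.isLt; omega⟩

/-- `F` is an associative `n`-ary operation. -/
def NAssoc {n : ℕ} (hn : 2 ≤ n) (F : (Fin n → X) → X) : Prop :=
  ∀ (i : ℕ) (hi : i + 1 ≤ n - 1) (x : Fin (2 * n - 1) → X),
    F (contract F i hn (by omega) x) = F (contract F (i + 1) hn (by omega) x)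

/-- `F` is a symmetric `n`-ary operation. -/
def NSym {n : ℕ} (F : (Fin n → X) → X) : Prop :=
  ∀ (σ : Equiv.Perm (Fin n)) (x : Fin n → X), F (x ∘ σ) = F x

/-- `F` is an idempotent `n`-ary operation. -/
def NIdem {n : ℕ} (F : (Fin n → X) → X) : Prop :=
  ∀ x : X, F (fun _ => x) = x

/-- The associated binary operation `B(x,y) = F(x,…,x,y)` (with `n-1` copies of `x`). -/
def assocB {n : ℕ} (F : (Fin n → X) → X) (x y : X) : X :=
  F (fun j => if (j : ℕ) < n - 1 then x else y)

/-- The map `ℓ_x : y ↦ B(x,y)`. -/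
def ell {n : ℕ} (F : (Fin n → X) → X) (x : X) : X → X :=
  fun y => assocB F x y

/-- The `n`-ary extension `G^{n-1}(x₁,…,xₙ) = G(x₁, G(x₂, …, G(x_{n-1}, xₙ)…))`
of a binary operation `G`. -/
def nExt {n : ℕ} (hn : 1 ≤ n) (G : X → X → X) (x : Fin n → X) : X :=
  (List.ofFn (fun i : Fin (n - 1) => x ⟨(i : ℕ), by have := i.isLt; omega⟩)).foldr G
    (x ⟨n - 1, by omega⟩)

/-- The relation `σ`: `x σ y` iff `B(x,y) = y` and `B(y,x) = x`. -/
def sigmaRel {n : ℕ} (F : (Fin n → X) → X) (x y : X) : Prop :=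
  assocB F x y = y ∧ assocB F y x = x

/-- `(A, mul)` is an abelian group with identity `e` and inversion `inv`. -/
def IsAbelianGroup {A : Type*} (mul : A → A → A) (e : A) (inv : A → A) : Prop :=
  (∀ a b c, mul (mul a b) c = mul a (mul b c)) ∧
  (∀ a b, mul a b = mul b a) ∧
  (∀ a, mul e a = a) ∧
  (∀ a, mul (inv a) a = e)

/-- `k`-fold product `a * ⋯ * a` with respect to `mul` (with `powMul mul e 0 a = e`). -/
def powMul {A : Type*} (mul : A → A → A) (e : A) : ℕ → A → A
  | 0, _ => e
  | k + 1, a => mul a (powMul mul e k a)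

end NaryBand

namespace NaryBand

variable {X : Type*} {n : ℕ} {F : (Fin n → X) → X}

section contract

variable (F) {i : ℕ} {hn : 2 ≤ n} {hi : i ≤ n - 1} (x : Fin (2 * n - 1) → X) {j : Fin n}

theorem contract_apply_of_lt (h : (j : ℕ) < i) :
    contract F i hn hi x j = x ⟨j, by omega⟩ :=
  dif_pos h

theorem contract_apply_of_eq (h : (j : ℕ) = i) :
    contract F i hn hi x j = F (fun k => x ⟨i + k, by omega⟩) := by
  rw [contract, dif_neg h.not_lt, dif_pos h]

theorem contract_apply_of_gt (h : i < (j : ℕ)) :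
    contract F i hn hi x j = x ⟨j + n - 1, by omega⟩ := by
  rw [contract, dif_neg (by omega), dif_neg (by omega)]

end contract

theorem NAssoc.apply_contract_eq {hn : 2 ≤ n} (hA : NAssoc hn F) (z : Fin (2 * n - 1) → X) :
    ∀ i (hi : i ≤ n - 1), F (contract F 0 hn (Nat.zero_le _) z) = F (contract F i hn hi z)
  | 0, _ => rfl
  | i + 1, hi => (hA.apply_contract_eq z i (by omega)).trans (hA i hi z)

theorem NAssoc.assocB_apply {hn : 2 ≤ n} (hA : NAssoc hn F) (a : X) (c : Fin n → X) :
    assocB F a (F c) =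
      F (Function.update c ⟨0, Nat.zero_lt_of_lt hn⟩
        (assocB F a (c ⟨0, Nat.zero_lt_of_lt hn⟩))) := by
  let z : Fin (2 * n - 1) → X := fun i =>
    if (i : ℕ) < n - 1 then a else c ⟨i - (n - 1), by omega⟩
  have hR : contract F (n - 1) hn le_rfl z =
      fun j : Fin n => if (j : ℕ) < n - 1 then a else F c := by
    funext j
    rcases lt_or_eq_of_le (Nat.le_sub_one_of_lt j.isLt) with hj | hj
    · rw [contract_apply_of_lt F z hj, if_pos hj]
      exact if_pos hj
    · rw [contract_apply_of_eq F z hj, if_neg hj.not_lt]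
      congr 1
      funext k
      simp only [z]
      rw [if_neg (by omega)]
      congr 1; ext; simp
  rw [assocB, ← hR, ← hA.apply_contract_eq]
  congr 1
  funext j
  rcases j with ⟨_ | j, hj⟩
  · rw [contract_apply_of_eq (j := ⟨0, hj⟩) F z rfl, Function.update_self, assocB]
    congr 1
    funext k
    simp only [z, zero_add]
    split_ifs
    · rfl
    · congr 1; ext; simp; omega
  · rw [contract_apply_of_gt F z j.succ_pos, Function.update_of_ne (by simp)]
    simp only [z]
    rw [if_neg (by omega)]
    congr 1; ext; simp; omega

theorem NAssoc.assocB_apply_eq_self {hn : 2 ≤ n} (hA : NAssoc hn F) {a : X} {c : Fin n → X}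
    (h : assocB F a (c ⟨0, Nat.zero_lt_of_lt hn⟩) = c ⟨0, Nat.zero_lt_of_lt hn⟩) :
    assocB F a (F c) = F c := by
  rw [hA.assocB_apply, h, Function.update_eq_self]

theorem NSym.assocB_eq (hS : NSym F) (hn : 0 < n) (a b : X) :
    assocB F a b = F (Function.update (fun _ => a) ⟨0, hn⟩ b) := by
  rw [assocB, ← hS (Equiv.swap ⟨0, hn⟩ ⟨n - 1, by omega⟩)]
  congr 1
  funext j
  simp only [Function.comp_apply, Equiv.swap_apply_def, Function.update_apply, Fin.ext_iff]
  split_ifs <;> simp_all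
  omega

theorem NIdem.assocB_self (hI : NIdem F) (x : X) : assocB F x x = x := by
  simpa only [assocB, ite_self] using hI x

theorem ell_comm {hn : 2 ≤ n} (hA : NAssoc hn F) (hS : NSym F) (x y z : X) :
    ell F x (ell F y z) = ell F y (ell F x z) := by
  simp only [ell]
  rw [hS.assocB_eq (by omega) y z, hA.assocB_apply, Function.update_idem, Function.update_self,
    ← hS.assocB_eq]

theorem ell_eq_of_sigmaRel {hn : 2 ≤ n} (hA : NAssoc hn F) (hS : NSym F) {x y : X}
    (h : sigmaRel F x y) : ell F x = ell F y := by
  have absorb (u v z : X) (huv : assocB F u v = v) : ell F u (ell F v z) = ell F v z :=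
    hA.assocB_apply_eq_self (by rwa [if_pos (show 0 < n - 1 by omega)])
  funext z
  calc ell F x z = ell F y (ell F x z) := (absorb y x z h.2).symm
    _ = ell F x (ell F y z) := (ell_comm hA hS x y z).symm
    _ = ell F y z := absorb x y z h.1

end NaryBand

open NaryBand

/-- In a symmetric `n`-ary band, for all `x, y` the following are
equivalent: (i) `x σ y`; (ii) `ℓ_x = ℓ_y`; (iii) `y = ℓ_x(t)` and `x = ℓ_y(t')`
for some `t, t'`; (iv) `y = F(x,x₂,…,xₙ)` and `x = F(y,y₂,…,yₙ)` for some
`x₂,…,xₙ,y₂,…,yₙ`. -/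
theorem stmt_9 {X : Type*} {n : ℕ} (hn : 2 ≤ n) (F : (Fin n → X) → X)
    (hA : NAssoc hn F) (hS : NSym F) (hI : NIdem F) :
    ∀ x y : X,
      List.TFAE
        [sigmaRel F x y,
         ell F x = ell F y,
         ∃ t t' : X, y = ell F x t ∧ x = ell F y t',
         ∃ xs ys : Fin n → X, xs ⟨0, by omega⟩ = x ∧ ys ⟨0, by omega⟩ = y ∧
           y = F xs ∧ x = F ys] := by
  intro x y
  tfae_have 1 → 2 := ell_eq_of_sigmaRel hA hS
  tfae_have 2 → 3 := fun h =>
    ⟨y, x, by rw [h, ell, hI.assocB_self], by rw [← h, ell, hI.assocB_self]⟩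
  tfae_have 3 → 4 := by
    rintro ⟨t, t', hy, hx⟩
    exact ⟨_, _, if_pos (by simp; omega), if_pos (by simp; omega), hy, hx⟩
  tfae_have 4 → 1 := by
    rintro ⟨xs, ys, rfl, rfl, hy, hx⟩
    constructor
    · rw [hy]
      exact hA.assocB_apply_eq_self (hI.assocB_self _)
    · rw [hx]
      exact hA.assocB_apply_eq_self (hI.assocB_self _)
  tfae_finish
end

section
/- Let (X,F) be a symmetric n-ary band and let x, y ∈ X satisfy B(x,y) = y (i.e., [x] ≥ [y]). Then ℓ_y maps the σ-class [x] into the σ-class [y], and the restriction of ℓ_y to [x] is a homomorphism of n-ary semigroups from ([x], F restricted to [x]^n) to ([y], F restricted to [y]^n): for all x₁,…,xₙ ∈ [x], ℓ_y(F(x₁,…,xₙ)) = F(ℓ_y(x₁),…,ℓ_y(xₙ)). -/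
open NaryBand

/-! Associativity on the word `y^{n-1} a₁ ⋯ aₙ`, contracted at its last and at its first window,
gives `ℓ_y (F(a₁,…,aₙ)) = F(ℓ_y a₁, a₂, …, aₙ)`, and by symmetry `ℓ_y` may be moved onto any
argument. Since `ℓ_y y = y`, the same identity makes `ℓ_y` idempotent, so pushing `ℓ_y` onto the
arguments one at a time yields `ℓ_y (F a) = F (ℓ_y ∘ a)` for every `a`. It also shows that
`B(z,x) = x` and `B(x,y) = y` imply `B(z,y) = y`; hence for `z ∈ [x]`,
`B(ℓ_y z, y) = ℓ_y (B(z,y)) = ℓ_y y = y`, which puts `ℓ_y z` in `[y]`. -/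

namespace NaryBand

variable {X : Type*} {n : ℕ} {hn : 2 ≤ n} {F : (Fin n → X) → X}

theorem NAssoc.apply_contract_eq_apply_contract_zero (hA : NAssoc hn F) :
    ∀ (i : ℕ) (hi : i ≤ n - 1) (x : Fin (2 * n - 1) → X),
      F (contract F i hn hi x) = F (contract F 0 hn (Nat.zero_le _) x)
  | 0, _, _ => rfl
  | i + 1, hi, x =>
    (hA i hi x).symm.trans (apply_contract_eq_apply_contract_zero hA i (by omega) x)

theorem NAssoc.ell_apply_eq_apply_update_zero (hA : NAssoc hn F) (y : X) (a : Fin n → X) :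
    ell F y (F a) =
      F (Function.update a ⟨0, by omega⟩ (ell F y (a ⟨0, by omega⟩))) := by
  set x : Fin (2 * n - 1) → X := fun j =>
    if (j : ℕ) < n - 1 then y else a ⟨j - (n - 1), by omega⟩ with hx
  have h_last :
      contract F (n - 1) hn le_rfl x = fun j : Fin n => if (j : ℕ) < n - 1 then y else F a := by
    funext j
    simp only [contract]
    split_ifs with h₁ h₂ <;> try omega
    · simp [hx, h₁]
    · congr 1
      funext k
      simp [hx]
  have h_first : contract F 0 hn (Nat.zero_le _) x =
      Function.update a ⟨0, by omega⟩ (ell F y (a ⟨0, by omega⟩)) := by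
    funext j
    simp only [contract]
    split_ifs with h₁ h₂ <;> try omega
    · obtain rfl : j = ⟨0, Nat.zero_lt_of_lt hn⟩ := Fin.ext h₂
      simp only [Function.update_self]
      congr 1
      funext k
      simp only [hx, zero_add]
      split_ifs
      · rfl
      · congr 1
        ext
        simp only
        omega
    · have : j ≠ ⟨0, by omega⟩ := fun h => h₂ (congrArg Fin.val h)
      rw [Function.update_of_ne this]
      simp only [hx, if_neg (show ¬(j : ℕ) + n - 1 < n - 1 by omega)]
      congr 1
      ext
      simp only
      omega
  calc ell F y (F a) = F (contract F (n - 1) hn le_rfl x) := by rw [h_last]; rfl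
    _ = _ := by rw [hA.apply_contract_eq_apply_contract_zero, h_first]

theorem NAssoc.ell_apply_eq_apply_update (hA : NAssoc hn F) (hS : NSym F) (y : X)
    (a : Fin n → X) (i : Fin n) :
    ell F y (F a) = F (Function.update a i (ell F y (a i))) := by
  set τ := Equiv.swap (⟨0, by omega⟩ : Fin n) i
  calc ell F y (F a) = ell F y (F (a ∘ τ)) := by rw [hS]
    _ = F (Function.update (a ∘ τ) ⟨0, by omega⟩ (ell F y (a (τ ⟨0, by omega⟩)))) :=
      hA.ell_apply_eq_apply_update_zero y _
    _ = F (Function.update a i (ell F y (a i)) ∘ τ) := by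
      rw [Function.update_comp_equiv, Equiv.swap_apply_left, Equiv.symm_swap,
        Equiv.swap_apply_right]
    _ = _ := hS _ _

theorem NIdem.ell_self (hI : NIdem F) (y : X) : ell F y y = y := by
  simpa only [ell, assocB, ite_self] using hI y

theorem NAssoc.ell_ell_of_ell_eq (hA : NAssoc hn F) {x z : X} (h : ell F z x = x) (y : X) :
    ell F z (ell F x y) = ell F x y := by
  set b : Fin n → X := fun j => if (j : ℕ) < n - 1 then x else y
  have hb : b ⟨0, by omega⟩ = x := if_pos (show 0 < n - 1 by omega)
  calc ell F z (F b) = F (Function.update b ⟨0, by omega⟩ (ell F z (b ⟨0, by omega⟩))) :=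
        hA.ell_apply_eq_apply_update_zero z b
    _ = F b := by rw [hb, h, ← hb, Function.update_eq_self]

theorem NAssoc.ell_ell (hA : NAssoc hn F) (hI : NIdem F) (y z : X) :
    ell F y (ell F y z) = ell F y z :=
  hA.ell_ell_of_ell_eq (hI.ell_self y) z

theorem NAssoc.ell_apply_piecewise (hA : NAssoc hn F) (hS : NSym F) (hI : NIdem F) (y : X)
    (a : Fin n → X) (s : Finset (Fin n)) :
    ell F y (F (s.piecewise (ell F y ∘ a) a)) = ell F y (F a) := by
  induction s using Finset.induction_on with
  | empty => rw [Finset.piecewise_empty]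
  | insert i s hi ih =>
    have hai : s.piecewise (ell F y ∘ a) a i = a i := Finset.piecewise_eq_of_notMem _ _ _ hi
    rw [Finset.piecewise_insert, Function.comp_apply, ← hai,
      ← hA.ell_apply_eq_apply_update hS, hA.ell_ell hI, ih]

theorem NAssoc.ell_apply_eq_apply_ell (hA : NAssoc hn F) (hS : NSym F) (hI : NIdem F) (y : X)
    (a : Fin n → X) : ell F y (F a) = F (fun i => ell F y (a i)) := by
  set i₀ : Fin n := ⟨0, by omega⟩
  calc ell F y (F a) = ell F y (F (ell F y ∘ a)) := by
        rw [← Finset.piecewise_univ (ell F y ∘ a) a, hA.ell_apply_piecewise hS hI]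
    _ = F (Function.update (ell F y ∘ a) i₀ (ell F y (ell F y (a i₀)))) :=
      hA.ell_apply_eq_apply_update hS y _ i₀
    _ = F (fun i => ell F y (a i)) := by
      rw [hA.ell_ell hI, ← Function.comp_apply (f := ell F y), Function.update_eq_self]; rfl

theorem NAssoc.ell_assocB (hA : NAssoc hn F) (hS : NSym F) (hI : NIdem F) (y a b : X) :
    ell F y (assocB F a b) = assocB F (ell F y a) (ell F y b) := by
  simp only [assocB, hA.ell_apply_eq_apply_ell hS hI, apply_ite]

end NaryBand

/-- In a symmetric `n`-ary band, if `B(x,y) = y` (i.e. `[x] ≥ [y]`),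
then `ℓ_y` maps `[x]` into `[y]` and restricts to a homomorphism of `n`-ary
semigroups from `([x], F)` to `([y], F)`. -/
theorem stmt_13 {X : Type*} {n : ℕ} (hn : 2 ≤ n) (F : (Fin n → X) → X)
    (hA : NAssoc hn F) (hS : NSym F) (hI : NIdem F) :
    ∀ x y : X, assocB F x y = y →
      (∀ z : X, sigmaRel F x z → sigmaRel F y (ell F y z)) ∧
      (∀ xs : Fin n → X, (∀ i, sigmaRel F x (xs i)) →
        ell F y (F xs) = F (fun i => ell F y (xs i))) := by
  intro x y hxy
  refine ⟨fun z ⟨_, hzx⟩ => ⟨hA.ell_ell hI y z, ?_⟩,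
    fun xs _ => hA.ell_apply_eq_apply_ell hS hI y xs⟩
  have hzy : assocB F z y = y := by
    rw [← hxy]
    exact hA.ell_ell_of_ell_eq hzx y
  calc assocB F (ell F y z) y = assocB F (ell F y z) (ell F y y) := by rw [hI.ell_self]
    _ = ell F y (assocB F z y) := (hA.ell_assocB hS hI y z y).symm
    _ = y := by rw [hzy, hI.ell_self]
end

section
/- Let (X,F) be a symmetric n-ary band presented as a strong n-ary semilattice [Y,(X_α,F_α),φ_{α,β}] of n-ary extensions of abelian groups whose exponents divide n−1 (i.e., (Y,∧) is a semilattice, each F_α on X_α is the n-ary extension of an abelian group operation *_α of exponent dividing n−1, the maps φ_{α,β} : X_α → X_β for α ≥ β satisfy φ_{α,α} = id, φ_{β,γ} ∘ φ_{α,β} = φ_{α,γ} for α ≥ β ≥ γ, each φ_{α,β} is a homomorphism of n-ary semigroups, and F(x₁,…,xₙ) = F_α(φ_{α₁,α}(x₁),…,φ_{αₙ,α}(xₙ)) for x_i ∈ X_{α_i} with α = α₁ ∧ ⋯ ∧ αₙ). Then F is reducible to an associative binary operation G : X² → X (F = G^{n−1}) if and only if there exists a map e : Y → X such that e(α) ∈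 X_α for every α ∈ Y and φ_{α,β}(e(α)) = e(β) whenever α ≥ β. -/
open NaryBand

/-!
Write `X = Σ α, X α`, and let `descend γ` push an element of a component `X α` with `γ ≤ α`
down to `X γ` along `φ`.

(⇐) Given compatible base points `e`, put `x * y = φ x · φ y · e⁻¹` in the component of the meet.
Relative to the base points (`s ↦ φ s / e`) every `φ_{α,γ}` becomes a group homomorphism, which
makes `*` associative; its `(n-1)`-fold extension multiplies `n` elements and divides by
`e^{n-1} = 1`, so it is `F`.

(⇒) If `F = G^{n-1}` with `G` associative, the `G`-power `p x = x^{n-1}` satisfies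
`G (p x) y = F(x,…,x,y)` and `G y (p x) = F(y,x,…,x)`, and both are `y` pushed down to the meet
because `(n-1)`-th powers vanish in the groups. Hence `p x` is an idempotent in the component of `x`,
and the two ways of evaluating `G (p x) (p z)` show that these idempotents are compatible.
-/

namespace NaryBand

section NExt

variable {S T : Type*}

theorem nExt_succ {k : ℕ} (h : 1 ≤ k + 1) (G : S → S → S) (x : Fin (k + 1) → S) :
    nExt h G x = (List.ofFn fun i : Fin k => x i.castSucc).foldr G (x (Fin.last k)) :=
  rfl

theorem nExt_snoc_const {k : ℕ} (h : 1 ≤ k + 1) (G : S → S → S) (x y : S) :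
    nExt h G (Fin.snoc (fun _ : Fin k => x) y) = (G x)^[k] y := by
  rw [nExt_succ]
  simp only [Fin.snoc_castSucc, Fin.snoc_last]
  clear h
  induction k with
  | zero => rfl
  | succ k ih => rw [List.ofFn_succ, List.foldr_cons, ih, Function.iterate_succ_apply']

theorem nExt_cons_const {k : ℕ} (h : 1 ≤ k + 2) (G : S → S → S) (x y : S) :
    nExt h G (Fin.cons y (fun _ : Fin (k + 1) => x)) = G y ((G x)^[k] x) := by
  have h' : 1 ≤ k + 1 := by omega
  rw [nExt_succ, List.ofFn_succ, List.foldr_cons, ← nExt_snoc_const h' G x x, nExt_succ]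
  simp only [Fin.castSucc_zero, Fin.cons_zero, Fin.snoc_castSucc, Fin.snoc_last,
    ← Fin.succ_castSucc, Fin.cons_succ, ← Fin.succ_last]

theorem map_nExt {G : S → S → S} {H : T → T → T} (f : S → T) (P : S → Prop)
    (hP : ∀ a b, P a → P b → P (G a b)) (hf : ∀ a b, P a → P b → f (G a b) = H (f a) (f b))
    {n : ℕ} (h : 1 ≤ n) (x : Fin n → S) (hx : ∀ i, P (x i)) :
    f (nExt h G x) = nExt h H fun i => f (x i) := by
  obtain ⟨k, rfl⟩ := Nat.exists_eq_add_of_le' h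
  have key : ∀ (l : List S) (b : S), (∀ a ∈ l, P a) → P b →
      P (l.foldr G b) ∧ f (l.foldr G b) = (l.map f).foldr H (f b) := by
    intro l b hl hb
    induction l with
    | nil => exact ⟨hb, rfl⟩
    | cons a l ih =>
      obtain ⟨hPl, hfl⟩ := ih fun c hc => hl c (List.mem_cons_of_mem a hc)
      have hPa := hl a List.mem_cons_self
      exact ⟨hP _ _ hPa hPl, by rw [List.foldr_cons, hf _ _ hPa hPl, hfl]; rfl⟩
  rw [nExt_succ, nExt_succ, (key _ _ (by simp [List.mem_ofFn, hx]) (hx _)).2, List.map_ofFn]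
  rfl

theorem nExt_mul_eq_prod {M : Type*} [CommMonoid M] {n : ℕ} (h : 1 ≤ n) (x : Fin n → M) :
    nExt h (· * ·) x = ∏ i, x i := by
  obtain ⟨k, rfl⟩ := Nat.exists_eq_add_of_le' h
  have key : ∀ (l : List M) (b : M), l.foldr (· * ·) b = l.prod * b := by
    intro l b
    induction l with
    | nil => simp
    | cons a l ih => rw [List.foldr_cons, ih, List.prod_cons, mul_assoc]
  rw [nExt_succ, key, List.prod_ofFn, Fin.prod_univ_castSucc]

theorem nExt_inf_le {Y : Type*} [SemilatticeInf Y] {n : ℕ} (h : 1 ≤ n) (x : Fin n → Y)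
    (i : Fin n) : nExt h (· ⊓ ·) x ≤ x i := by
  obtain ⟨k, rfl⟩ := Nat.exists_eq_add_of_le' h
  have key : ∀ (l : List Y) (b : Y), ∀ a ∈ b :: l, l.foldr (· ⊓ ·) b ≤ a := by
    intro l b
    induction l with
    | nil => simp
    | cons c l ih =>
      simp only [List.mem_cons, List.foldr_cons, forall_eq_or_imp] at ih ⊢
      exact ⟨inf_le_of_right_le ih.1, inf_le_left, fun a ha => inf_le_of_right_le (ih.2 a ha)⟩
  rw [nExt_succ]
  apply key
  induction i using Fin.lastCases <;> simp [List.mem_ofFn]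

theorem iterate_succ_apply_of_assoc {G : S → S → S} (hG : ∀ a b c, G (G a b) c = G a (G b c))
    (x y : S) (k : ℕ) : (G x)^[k + 1] y = G ((G x)^[k] x) y := by
  induction k generalizing y with
  | zero => rfl
  | succ k ih =>
    rw [Function.iterate_succ_apply', ih, Function.iterate_succ_apply', hG]

theorem iterate_self_idem_of_iterate_succ_self {G : S → S → S}
    (hG : ∀ a b c, G (G a b) c = G a (G b c)) {x : S} {m : ℕ} (hx : (G x)^[m + 1] x = x) :
    G ((G x)^[m] x) ((G x)^[m] x) = (G x)^[m] x := by
  rw [← iterate_succ_apply_of_assoc hG, ← Function.iterate_add_apply, add_comm,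
    Function.iterate_add_apply, hx]

end NExt

section Groups

theorem powMul_eq_pow {M : Type*} [Monoid M] (k : ℕ) (a : M) : powMul (· * ·) 1 k a = a ^ k := by
  induction k with
  | zero => exact (pow_zero a).symm
  | succ k ih => rw [powMul, ih, pow_succ']

abbrev IsAbelianGroup.commGroup {A : Type*} {mul : A → A → A} {e : A} {inv : A → A}
    (h : IsAbelianGroup mul e inv) : CommGroup A where
  mul := mul
  one := e
  inv := inv
  mul_assoc := h.1
  mul_comm := h.2.1
  one_mul := h.2.2.1
  mul_one a := (h.2.1 a e).trans (h.2.2.1 a)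
  inv_mul_cancel := h.2.2.2

variable {A B : Type*} [CommGroup A] [CommGroup B] {m : ℕ}

theorem prod_cons_cons_const_eq_mul_div (hA : ∀ a : A, a ^ (m + 1) = 1) (a b c : A) :
    ∏ i, (Fin.cons a (Fin.cons b fun _ : Fin m => c) : Fin (m + 2) → A) i = a * b / c := by
  have hc : c ^ m = c⁻¹ := eq_inv_of_mul_eq_one_left (by rw [← pow_succ, hA])
  simp only [Fin.prod_univ_succ, Fin.cons_zero, Fin.cons_succ, Finset.prod_const,
    Finset.card_univ, Fintype.card_fin, hc, div_eq_mul_inv, mul_assoc]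

theorem map_mul_div_of_map_prod (hA : ∀ a : A, a ^ (m + 1) = 1) (hB : ∀ b : B, b ^ (m + 1) = 1)
    {f : A → B} (hf : ∀ a : Fin (m + 2) → A, f (∏ i, a i) = ∏ i, f (a i)) (a b c : A) :
    f (a * b / c) = f a * f b / f c := by
  rw [← prod_cons_cons_const_eq_mul_div hA, hf, ← prod_cons_cons_const_eq_mul_div hB]
  congr 1
  funext i
  refine Fin.cases rfl (fun j => ?_) i
  refine Fin.cases rfl (fun k => ?_) j
  rfl

end Groups

section StrongSemilattice

variable {Y : Type*} {X : Y → Type*} (φ : ∀ α β, X α → X β)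

def descend (γ : Y) (s : Σ α, X α) : Σ α, X α :=
  ⟨γ, φ s.1 γ s.2⟩

variable {φ} in
theorem descend_of_fst_eq (hid : ∀ α, φ α α = id) {γ : Y} {s : Σ α, X α} (h : s.1 = γ) :
    descend φ γ s = s := by
  obtain ⟨α, a⟩ := s
  subst h
  simp [descend, hid]

variable [SemilatticeInf Y]

def strongOp [∀ α, CommMonoid (X α)] {n : ℕ} (h : 1 ≤ n) (xs : Fin n → Σ α, X α) :
    Σ α, X α :=
  ⟨nExt h (· ⊓ ·) fun i => (xs i).1, ∏ i, φ (xs i).1 _ (xs i).2⟩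

variable [∀ α, CommMonoid (X α)]

theorem strongOp_eq_of_fst_eq {n : ℕ} (h : 1 ≤ n) {xs : Fin n → Σ α, X α} {γ : Y}
    (hγ : nExt h (· ⊓ ·) (fun i => (xs i).1) = γ) :
    strongOp φ h xs = ⟨γ, ∏ i, φ (xs i).1 γ (xs i).2⟩ := by
  subst hγ
  rfl

theorem strongOp_snoc_const {m : ℕ} (hexp : ∀ α (a : X α), a ^ (m + 1) = 1) (h : 1 ≤ m + 2)
    (x y : Σ α, X α) :
    strongOp φ h (Fin.snoc (fun _ : Fin (m + 1) => x) y) = descend φ (x.1 ⊓ y.1) y := by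
  refine (strongOp_eq_of_fst_eq φ h (γ := x.1 ⊓ y.1) ?_).trans ?_
  · change nExt h _ (Sigma.fst ∘ Fin.snoc _ y) = _
    rw [Fin.comp_snoc]
    refine (nExt_snoc_const h _ x.1 y.1).trans ?_
    rw [Function.iterate_succ_apply]
    exact Function.iterate_fixed (inf_left_idem x.1 y.1) m
  · change (⟨_, ∏ i, ((fun s : Σ α, X α => φ s.1 (x.1 ⊓ y.1) s.2) ∘ Fin.snoc _ y) i⟩ : Σ α, X α) = _
    rw [Fin.comp_snoc, Fin.prod_univ_castSucc]
    simp only [Fin.snoc_castSucc, Fin.snoc_last, Function.comp_apply, Finset.prod_const,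
      Finset.card_univ, Fintype.card_fin, hexp, one_mul, descend]

theorem strongOp_cons_const {m : ℕ} (hexp : ∀ α (a : X α), a ^ (m + 1) = 1) (h : 1 ≤ m + 2)
    (x y : Σ α, X α) :
    strongOp φ h (Fin.cons y (fun _ : Fin (m + 1) => x)) = descend φ (y.1 ⊓ x.1) y := by
  refine (strongOp_eq_of_fst_eq φ h (γ := y.1 ⊓ x.1) ?_).trans ?_
  · change nExt h _ (Sigma.fst ∘ Fin.cons y _) = _
    rw [Fin.comp_cons]
    refine (nExt_cons_const h _ x.1 y.1).trans ?_
    rw [Function.iterate_fixed (inf_idem x.1)]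
  · change (⟨_, ∏ i, ((fun s : Σ α, X α => φ s.1 (y.1 ⊓ x.1) s.2) ∘ Fin.cons y _) i⟩ : Σ α, X α) = _
    rw [Fin.comp_cons, Fin.prod_univ_succ]
    simp only [Fin.cons_zero, Fin.cons_succ, Function.comp_apply, Finset.prod_const,
      Finset.card_univ, Fintype.card_fin, hexp, mul_one, descend]

end StrongSemilattice

section Reducible

variable {Y : Type*} [SemilatticeInf Y] {X : Y → Type*} {φ : ∀ α β, X α → X β}

theorem exists_compatible_section_of_assoc (hid : ∀ α, φ α α = id) (hne : ∀ α, Nonempty (X α))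
    {G : (Σ α, X α) → (Σ α, X α) → Σ α, X α} (hG : ∀ a b c, G (G a b) c = G a (G b c)) {m : ℕ}
    (hleft : ∀ x y, (G x)^[m + 1] y = descend φ (x.1 ⊓ y.1) y)
    (hright : ∀ x y, G y ((G x)^[m] x) = descend φ (y.1 ⊓ x.1) y) :
    ∃ e : ∀ α, X α, ∀ α β, β ≤ α → φ α β (e α) = e β := by
  let p : (Σ α, X α) → Σ α, X α := fun x => (G x)^[m] x
  have hpG : ∀ x y, G (p x) y = descend φ (x.1 ⊓ y.1) y := fun x y => by
    rw [← hleft, iterate_succ_apply_of_assoc hG]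
  have hpx : ∀ x, G (p x) x = x := fun x =>
    (hpG x x).trans (descend_of_fst_eq hid (inf_idem _).symm)
  have hp_idem : ∀ x, G (p x) (p x) = p x := fun x =>
    iterate_self_idem_of_iterate_succ_self hG ((iterate_succ_apply_of_assoc hG x x m).trans (hpx x))
  have hp_fst : ∀ x, (p x).1 = x.1 := by
    intro x
    have hpp : p (p x) = p x := Function.iterate_fixed (hp_idem x) m
    refine le_antisymm ?_ ?_
    · rw [← hp_idem x, hpG]
      exact inf_le_left
    · have h := congrArg Sigma.fst ((hpG (p x) x).symm.trans (hpp ▸ hpx x))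
      exact inf_eq_right.1 h
  have hsec : ∀ s : Σ α, X α, ∀ α, s.1 = α → ∃ a, s = ⟨α, a⟩ := by
    rintro ⟨β, b⟩ α rfl
    exact ⟨b, rfl⟩
  have c : ∀ α, X α := fun α => (hne α).some
  choose e he using fun α => hsec _ α (hp_fst ⟨α, c α⟩)
  refine ⟨e, fun α β hβα => sigma_mk_injective ?_⟩
  calc (⟨β, φ α β (e α)⟩ : Σ α, X α)
      = descend φ ((p ⟨α, c α⟩).1 ⊓ β) (p ⟨α, c α⟩) := by
        rw [he α, inf_eq_right.2 hβα]
        rfl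
    _ = G (p ⟨α, c α⟩) (p ⟨β, c β⟩) := (hright ⟨β, c β⟩ _).symm
    _ = ⟨β, e β⟩ := by
        rw [hpG, he β]
        exact descend_of_fst_eq hid (inf_eq_right.2 hβα).symm

end Reducible

section Construction

variable {Y : Type*} {X : Y → Type*} [∀ α, CommGroup (X α)] (φ : ∀ α β, X α → X β)
  (e : ∀ α, X α)

def coordAt (γ : Y) (s : Σ α, X α) : X γ :=
  φ s.1 γ s.2 / e γ

variable {φ} in
theorem eq_of_coordAt_eq (hid : ∀ α, φ α α = id) {γ : Y} {s t : Σ α, X α} (hs : s.1 = γ)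
    (ht : t.1 = γ) (h : coordAt φ e γ s = coordAt φ e γ t) : s = t := by
  obtain ⟨α, a⟩ := s
  obtain ⟨β, b⟩ := t
  subst hs ht
  simpa [coordAt, hid] using h

variable [SemilatticeInf Y]

def strongMul (x y : Σ α, X α) : Σ α, X α :=
  ⟨x.1 ⊓ y.1, φ x.1 _ x.2 * φ y.1 _ y.2 / e (x.1 ⊓ y.1)⟩

variable {φ e}

theorem coordAt_strongMul (hcomp : ∀ α β γ, β ≤ α → γ ≤ β → ∀ a, φ β γ (φ α β a) = φ α γ a)
    (haff : ∀ α β, β ≤ α → ∀ a b c : X α, φ α β (a * b / c) = φ α β a * φ α β b / φ α β c)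
    (he : ∀ α β, β ≤ α → φ α β (e α) = e β) {γ : Y} {x y : Σ α, X α} (hγ : γ ≤ x.1 ⊓ y.1) :
    coordAt φ e γ (strongMul φ e x y) = coordAt φ e γ x * coordAt φ e γ y := by
  simp only [coordAt, strongMul]
  rw [haff _ _ hγ, hcomp _ _ _ inf_le_left hγ, hcomp _ _ _ inf_le_right hγ, he _ _ hγ,
    div_mul_div_comm, div_div]

theorem strongMul_assoc (hid : ∀ α, φ α α = id)
    (hcomp : ∀ α β γ, β ≤ α → γ ≤ β → ∀ a, φ β γ (φ α β a) = φ α γ a)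
    (haff : ∀ α β, β ≤ α → ∀ a b c : X α, φ α β (a * b / c) = φ α β a * φ α β b / φ α β c)
    (he : ∀ α β, β ≤ α → φ α β (e α) = e β) (x y z : Σ α, X α) :
    strongMul φ e (strongMul φ e x y) z = strongMul φ e x (strongMul φ e y z) := by
  set γ := x.1 ⊓ y.1 ⊓ z.1
  have hxy : γ ≤ x.1 ⊓ y.1 := inf_le_left
  have hyz : γ ≤ y.1 ⊓ z.1 := le_inf (inf_le_left.trans inf_le_right) inf_le_right
  refine eq_of_coordAt_eq e hid (γ := γ) rfl (inf_assoc _ _ _).symm ?_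
  rw [coordAt_strongMul hcomp haff he (le_inf hxy inf_le_right),
    coordAt_strongMul hcomp haff he hxy,
    coordAt_strongMul hcomp haff he (le_inf (hxy.trans inf_le_left) hyz),
    coordAt_strongMul hcomp haff he hyz, mul_assoc]

theorem nExt_strongMul (hid : ∀ α, φ α α = id)
    (hcomp : ∀ α β γ, β ≤ α → γ ≤ β → ∀ a, φ β γ (φ α β a) = φ α γ a)
    (haff : ∀ α β, β ≤ α → ∀ a b c : X α, φ α β (a * b / c) = φ α β a * φ α β b / φ α β c)
    (he : ∀ α β, β ≤ α → φ α β (e α) = e β) {m : ℕ} (hexp : ∀ α (a : X α), a ^ (m + 1) = 1)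
    (h : 1 ≤ m + 2) : nExt h (strongMul φ e) = strongOp φ h := by
  funext t
  set γ := nExt h (· ⊓ ·) fun i => (t i).1
  have hfst : (nExt h (strongMul φ e) t).1 = γ :=
    map_nExt Sigma.fst (fun _ => True) (fun _ _ _ _ => trivial) (fun _ _ _ _ => rfl) h t
      fun _ => trivial
  refine eq_of_coordAt_eq e hid hfst rfl ?_
  rw [map_nExt (coordAt φ e γ) (γ ≤ ·.1) (fun _ _ ha hb => le_inf ha hb)
    (fun _ _ ha hb => coordAt_strongMul hcomp haff he (le_inf ha hb)) h t (nExt_inf_le h _),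
    nExt_mul_eq_prod, strongOp_eq_of_fst_eq φ h (γ := γ) rfl]
  simp only [coordAt, hid, id, Finset.prod_div_distrib, Finset.prod_const,
    Finset.card_univ, Fintype.card_fin, pow_succ, hexp, one_mul]

end Construction

end NaryBand

/-- A symmetric `n`-ary band presented as a strong `n`-ary
semilattice `[Y,(X_α,F_α),φ_{α,β}]` of `n`-ary extensions of abelian groups whose
exponents divide `n-1` is reducible to an associative binary operation
(`F = G^{n-1}`) if and only if there is a map `e` choosing `e(α) ∈ X_α` with
`φ_{α,β}(e(α)) = e(β)` whenever `α ≥ β`. -/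
theorem stmt_19 {Y : Type*} {Xf : Y → Type*} {n : ℕ} (hn : 2 ≤ n)
    (meet : Y → Y → Y)
    (hassoc : ∀ a b c, meet (meet a b) c = meet a (meet b c))
    (hcomm : ∀ a b, meet a b = meet b a)
    (hidem : ∀ a, meet a a = a)
    (hne : ∀ α, Nonempty (Xf α))
    (mulA : ∀ α, Xf α → Xf α → Xf α) (eA : ∀ α, Xf α) (invA : ∀ α, Xf α → Xf α)
    (hgrp : ∀ α, IsAbelianGroup (mulA α) (eA α) (invA α))
    (hexp : ∀ α (a : Xf α), powMul (mulA α) (eA α) (n - 1) a = eA α)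
    (Fa : ∀ α, (Fin n → Xf α) → Xf α)
    (hFaDef : ∀ α, Fa α = nExt (show 1 ≤ n by omega) (mulA α))
    (φ : ∀ α β, Xf α → Xf β)
    (hid : ∀ α, φ α α = id)
    (hcomp : ∀ α β γ, meet α β = β → meet β γ = γ → φ β γ ∘ φ α β = φ α γ)
    (hhom : ∀ α β, meet α β = β → ∀ xs : Fin n → Xf α,
      φ α β (Fa α xs) = Fa β (fun i => φ α β (xs i)))
    (F : (Fin n → Σ α, Xf α) → Σ α, Xf α)
    (hFdef : ∀ xs : Fin n → Σ α, Xf α,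
      F xs = ⟨nExt (show 1 ≤ n by omega) meet (fun i => (xs i).1),
        Fa _ (fun i => φ (xs i).1 _ (xs i).2)⟩) :
    (∃ G : (Σ α, Xf α) → (Σ α, Xf α) → (Σ α, Xf α),
      (∀ a b c, G (G a b) c = G a (G b c)) ∧
      F = nExt (show 1 ≤ n by omega) G) ↔
    (∃ e : ∀ α, Xf α, ∀ α β, meet α β = β → φ α β (e α) = e β) := by
  obtain ⟨m, rfl⟩ : ∃ m, n = m + 2 := ⟨n - 2, by omega⟩
  let : Min Y := ⟨meet⟩
  let : SemilatticeInf Y := SemilatticeInf.mk' hcomm hassoc hidem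
  let : ∀ α, CommGroup (Xf α) := fun α => (hgrp α).commGroup
  have hpow : ∀ α (a : Xf α), a ^ (m + 1) = 1 := fun α a =>
    (powMul_eq_pow (m + 1) a).symm.trans (hexp α a)
  have hcomp_le : ∀ α β γ, β ≤ α → γ ≤ β → ∀ a, φ β γ (φ α β a) = φ α γ a :=
    fun α β γ hβ hγ => congrFun (hcomp α β γ hβ hγ)
  have hFa : ∀ α (xs : Fin (m + 2) → Xf α), Fa α xs = ∏ i, xs i := fun α xs =>
    (congrFun (hFaDef α) xs).trans (nExt_mul_eq_prod _ xs)
  have haff : ∀ α β, β ≤ α → ∀ a b c : Xf α,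
      φ α β (a * b / c) = φ α β a * φ α β b / φ α β c := fun α β hβ =>
    map_mul_div_of_map_prod (hpow α) (hpow β) fun xs => by
      simpa only [hFa] using hhom α β hβ xs
  obtain rfl : F = strongOp φ (by omega) := funext fun xs => by
    rw [hFdef, hFa]
    rfl
  constructor
  · rintro ⟨G, hG, hFG⟩
    refine exists_compatible_section_of_assoc hid hne hG (m := m) (fun x y => ?_) (fun x y => ?_)
    · rw [← nExt_snoc_const (by omega) G x y, ← hFG, strongOp_snoc_const φ hpow]
    · rw [← nExt_cons_const (by omega) G x y, ← hFG, strongOp_cons_const φ hpow]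
  · rintro ⟨e, he⟩
    exact ⟨strongMul φ e, strongMul_assoc hid hcomp_le haff he,
      (nExt_strongMul hid hcomp_le haff he hpow _).symm⟩
end
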